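/- For every 1 ≤ i ≤ n−1: α_i < 2e, α_i = 2e, or α_i > 2e according as R_{i+1} − R_i < 2e, R_{i+1} − R_i = 2e, or R_{i+1} − R_i > 2e. Consequently, α_i belongs to ([0, 2e] ∩ ℤ) ∪ ((2e, ∞) ∩ (1/2)ℤ). -/
import Mathlib


/-!
Combinatorial setting abstracting a good BONG over a dyadic local field.
`R : ℕ → ℤ` are the orders `R_i = ord a_i` (indices `1,…,n` used),
`d : ℕ → EReal` are the values `d_j = d(-a_j a_{j+1}) ∈ ℕ ∪ {∞}`
(the allowed values are encoded in condition (G3) below).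
-/

/-- The term `(R_{i+1} - R_i)/2 + e` appearing in the definition of `α_i`. -/
noncomputable def halfTerm (e : ℤ) (R : ℕ → ℤ) (i : ℕ) : EReal :=
  (((R (i + 1) - R i : ℝ) / 2 + (e : ℝ) : ℝ) : EReal)

/-- The set whose minimum defines `α_i`. -/
noncomputable def alphaSet (e : ℤ) (n : ℕ) (R : ℕ → ℤ) (d : ℕ → EReal) (i : ℕ) :
    Set EReal :=
  {halfTerm e R i}
    ∪ {x | ∃ j, 1 ≤ j ∧ j ≤ i ∧ x = ((R (i + 1) - R j : ℝ) : EReal) + d j}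
    ∪ {x | ∃ j, i ≤ j ∧ j + 1 ≤ n ∧ x = ((R (j + 1) - R i : ℝ) : EReal) + d j}

/-- The invariant `α_i = α_i(L)`, for `1 ≤ i ≤ n - 1`. -/
noncomputable def alpha (e : ℤ) (n : ℕ) (R : ℕ → ℤ) (d : ℕ → EReal) (i : ℕ) : EReal :=
  sInf (alphaSet e n R d i)

/-- `α'_m(k,l)`: the `α`-invariant of the truncated data `R_k,…,R_l`, `d_k,…,d_{l-1}`. -/
noncomputable def alphaT (e : ℤ) (R : ℕ → ℤ) (d : ℕ → EReal) (k l m : ℕ) : EReal :=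
  alpha e (l - k + 1) (fun j => R (k + j - 1)) (fun j => d (k + j - 1)) m

/-- Conditions (G1)-(G4) on the data `(e, n, R, d)`, abstracting a good BONG. -/
structure GoodBONG (e : ℤ) (n : ℕ) (R : ℕ → ℤ) (d : ℕ → EReal) : Prop where
  he : 1 ≤ e
  hn : 2 ≤ n
  g1 : ∀ i, 1 ≤ i → i + 2 ≤ n → R i ≤ R (i + 2)
  g2a : ∀ j, 1 ≤ j → j + 1 ≤ n → 0 ≤ R (j + 1) - R j + 2 * e
  g2b : ∀ j, 1 ≤ j → j + 1 ≤ n → 0 ≤ ((R (j + 1) - R j : ℝ) : EReal) + d j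
  g3 : ∀ j, 1 ≤ j → j + 1 ≤ n →
    d j = 0 ∨ (∃ m : ℕ, Odd m ∧ (m : ℤ) ≤ 2 * e - 1 ∧ d j = ((m : ℝ) : EReal)) ∨
      d j = (((2 * e : ℤ) : ℝ) : EReal) ∨ d j = ⊤
  g4odd : ∀ j, 1 ≤ j → j + 1 ≤ n → Odd (R (j + 1) - R j) →
    0 < R (j + 1) - R j ∧ d j = 0
  g4even : ∀ j, 1 ≤ j → j + 1 ≤ n → Even (R (j + 1) - R j) → 0 < d j


namespace Stmt15Aux

variable {e : ℤ} {n : ℕ} {R : ℕ → ℤ} {d : ℕ → EReal}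

/-- Chain of (G1): `R a ≤ R (a + 2k)`. -/
lemma chain (h : GoodBONG e n R d) (a : ℕ) (ha : 1 ≤ a) :
    ∀ k : ℕ, a + 2 * k ≤ n → R a ≤ R (a + 2 * k) := by
  intro k
  induction k with
  | zero => simp
  | succ m ih =>
    intro hk
    have h2 : a + 2 * m + 2 ≤ n := by omega
    have h3 := h.g1 (a + 2 * m) (by omega) h2
    have h4 := ih (by omega)
    have h5 : a + 2 * (m + 1) = a + 2 * m + 2 := by omega
    rw [h5]
    exact le_trans h4 h3

/-- Even-gap comparison from (G1). -/
lemma chainEven (h : GoodBONG e n R d) {a b : ℕ} (ha : 1 ≤ a) (hab : a ≤ b)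
    (hb : b ≤ n) (hpar : (b - a) % 2 = 0) : R a ≤ R b := by
  obtain ⟨k, hk⟩ : ∃ k, b = a + 2 * k := ⟨(b - a) / 2, by omega⟩
  subst hk
  exact chain h a ha k hb

lemma d_nonneg (h : GoodBONG e n R d) {j : ℕ} (h1 : 1 ≤ j) (h2 : j + 1 ≤ n) :
    0 ≤ d j := by
  rcases h.g3 j h1 h2 with h0 | ⟨m, _, _, hm⟩ | h2e | ht
  · rw [h0]
  · rw [hm]; exact EReal.coe_nonneg.2 (by positivity)
  · rw [h2e]
    refine EReal.coe_nonneg.2 ?_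
    have : (0:ℤ) ≤ 2 * e := by linarith [h.he]
    exact_mod_cast this
  · rw [ht]; exact le_top

lemma term1_nonneg (h : GoodBONG e n R d) {i j : ℕ} (hi : 1 ≤ i) (hin : i + 1 ≤ n)
    (hj1 : 1 ≤ j) (hji : j ≤ i) :
    0 ≤ ((R (i + 1) - R j : ℝ) : EReal) + d j := by
  rcases Nat.even_or_odd (i - j) with hpar | hpar
  · -- i - j even : use R (j+1) ≤ R (i+1) and (G2b)
    have hle : R (j + 1) ≤ R (i + 1) :=
      chainEven h (a := j + 1) (b := i + 1) (by omega) (by omega) hin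
        (by rcases hpar with ⟨k, hk⟩; omega)
    have hkey : ((R (i + 1) - R j : ℝ) : EReal) + d j
        = ((R (i + 1) - R (j + 1) : ℝ) : EReal) + (((R (j + 1) - R j : ℝ) : EReal) + d j) := by
      rw [← add_assoc, ← EReal.coe_add]
      norm_num
    rw [hkey]
    calc (0 : EReal) = 0 + 0 := by rw [add_zero]
    _ ≤ ((R (i + 1) - R (j + 1) : ℝ) : EReal) + (((R (j + 1) - R j : ℝ) : EReal) + d j) := by
        refine add_le_add ?_ (h.g2b j hj1 (by omega))
        have : (0:ℝ) ≤ (R (i+1) : ℝ) - R (j+1) := by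
          have := (fun {a b : ℤ} (hab : a ≤ b) => show (a:ℝ) ≤ (b:ℝ) by exact_mod_cast hab) hle; linarith
        exact EReal.coe_nonneg.2 this
  · -- i - j odd : use R j ≤ R (i+1)
    have hle : R j ≤ R (i + 1) :=
      chainEven h (a := j) (b := i + 1) hj1 (by omega) hin
        (by rcases hpar with ⟨k, hk⟩; omega)
    calc (0 : EReal) = 0 + 0 := by rw [add_zero]
    _ ≤ ((R (i + 1) - R j : ℝ) : EReal) + d j := by
        refine add_le_add ?_ (d_nonneg h hj1 (by omega))
        have : (0:ℝ) ≤ (R (i+1) : ℝ) - R j := by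
          have := (fun {a b : ℤ} (hab : a ≤ b) => show (a:ℝ) ≤ (b:ℝ) by exact_mod_cast hab) hle; linarith
        exact EReal.coe_nonneg.2 this

lemma term1_ge (h : GoodBONG e n R d) {i j : ℕ} (hi : 1 ≤ i) (hin : i + 1 ≤ n)
    (hj1 : 1 ≤ j) (hji : j ≤ i) :
    ((R (i + 1) - R i : ℝ) : EReal) ≤ ((R (i + 1) - R j : ℝ) : EReal) + d j := by
  rcases Nat.even_or_odd (i - j) with hpar | hpar
  · -- i - j even : R j ≤ R i
    have hle : R j ≤ R i :=
      chainEven h (a := j) (b := i) hj1 hji (by omega)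
        (by rcases hpar with ⟨k, hk⟩; omega)
    calc ((R (i + 1) - R i : ℝ) : EReal) = ((R (i + 1) - R i : ℝ) : EReal) + 0 := by
          rw [add_zero]
    _ ≤ ((R (i + 1) - R j : ℝ) : EReal) + d j := by
        refine add_le_add ?_ (d_nonneg h hj1 (by omega))
        refine EReal.coe_le_coe_iff.2 ?_
        have := (fun {a b : ℤ} (hab : a ≤ b) => show (a:ℝ) ≤ (b:ℝ) by exact_mod_cast hab) hle; linarith
  · -- i - j odd : j + 1 ≤ i, R (j+1) ≤ R i
    have hji' : j + 1 ≤ i := by rcases hpar with ⟨k, hk⟩; omega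
    have hle : R (j + 1) ≤ R i :=
      chainEven h (a := j + 1) (b := i) (by omega) hji' (by omega)
        (by rcases hpar with ⟨k, hk⟩; omega)
    have hkey : ((R (i + 1) - R j : ℝ) : EReal) + d j
        = ((R (i + 1) - R i : ℝ) : EReal)
          + (((R i - R (j + 1) : ℝ) : EReal) + (((R (j + 1) - R j : ℝ) : EReal) + d j)) := by
      rw [← add_assoc, ← add_assoc, ← EReal.coe_add, ← EReal.coe_add]
      norm_num
    rw [hkey]
    calc ((R (i + 1) - R i : ℝ) : EReal) = ((R (i + 1) - R i : ℝ) : EReal) + 0 := by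
          rw [add_zero]
    _ ≤ _ := by
        refine add_le_add le_rfl ?_
        calc (0 : EReal) = 0 + 0 := by rw [add_zero]
        _ ≤ _ := by
            refine add_le_add ?_ (h.g2b j hj1 (by omega))
            have : (0:ℝ) ≤ (R i : ℝ) - R (j+1) := by
              have := (fun {a b : ℤ} (hab : a ≤ b) => show (a:ℝ) ≤ (b:ℝ) by exact_mod_cast hab) hle; linarith
            exact EReal.coe_nonneg.2 this

lemma term2_nonneg (h : GoodBONG e n R d) {i j : ℕ} (hi : 1 ≤ i)
    (hij : i ≤ j) (hjn : j + 1 ≤ n) :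
    0 ≤ ((R (j + 1) - R i : ℝ) : EReal) + d j := by
  have hj1 : 1 ≤ j := le_trans hi hij
  rcases Nat.even_or_odd (j - i) with hpar | hpar
  · -- j - i even : R i ≤ R j, use G2b
    have hle : R i ≤ R j :=
      chainEven h hi hij (by omega) (by rcases hpar with ⟨k, hk⟩; omega)
    have hkey : ((R (j + 1) - R i : ℝ) : EReal) + d j
        = ((R j - R i : ℝ) : EReal) + (((R (j + 1) - R j : ℝ) : EReal) + d j) := by
      rw [← add_assoc, ← EReal.coe_add]
      norm_num
    rw [hkey]
    calc (0 : EReal) = 0 + 0 := by rw [add_zero]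
    _ ≤ _ := by
        refine add_le_add ?_ (h.g2b j hj1 hjn)
        have : (0:ℝ) ≤ (R j : ℝ) - R i := by
          have := (fun {a b : ℤ} (hab : a ≤ b) => show (a:ℝ) ≤ (b:ℝ) by exact_mod_cast hab) hle; linarith
        exact EReal.coe_nonneg.2 this
  · -- j - i odd : R i ≤ R (j+1)
    have hle : R i ≤ R (j + 1) :=
      chainEven h hi (by omega) hjn (by rcases hpar with ⟨k, hk⟩; omega)
    calc (0 : EReal) = 0 + 0 := by rw [add_zero]
    _ ≤ _ := by
        refine add_le_add ?_ (d_nonneg h hj1 hjn)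
        have : (0:ℝ) ≤ (R (j+1) : ℝ) - R i := by
          have := (fun {a b : ℤ} (hab : a ≤ b) => show (a:ℝ) ≤ (b:ℝ) by exact_mod_cast hab) hle; linarith
        exact EReal.coe_nonneg.2 this

lemma term2_ge (h : GoodBONG e n R d) {i j : ℕ} (hi : 1 ≤ i)
    (hij : i ≤ j) (hjn : j + 1 ≤ n) :
    ((R (i + 1) - R i : ℝ) : EReal) ≤ ((R (j + 1) - R i : ℝ) : EReal) + d j := by
  have hj1 : 1 ≤ j := le_trans hi hij
  rcases Nat.even_or_odd (j - i) with hpar | hpar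
  · -- j - i even : R (i+1) ≤ R (j+1)
    have hle : R (i + 1) ≤ R (j + 1) :=
      chainEven h (a := i + 1) (b := j + 1) (by omega) (by omega) hjn
        (by rcases hpar with ⟨k, hk⟩; omega)
    calc ((R (i + 1) - R i : ℝ) : EReal) = ((R (i + 1) - R i : ℝ) : EReal) + 0 := by
          rw [add_zero]
    _ ≤ _ := by
        refine add_le_add ?_ (d_nonneg h hj1 hjn)
        refine EReal.coe_le_coe_iff.2 ?_
        have := (fun {a b : ℤ} (hab : a ≤ b) => show (a:ℝ) ≤ (b:ℝ) by exact_mod_cast hab) hle; linarith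
  · -- j - i odd : i + 1 ≤ j, R (i+1) ≤ R j
    have hij' : i + 1 ≤ j := by rcases hpar with ⟨k, hk⟩; omega
    have hle : R (i + 1) ≤ R j :=
      chainEven h (a := i + 1) (b := j) (by omega) hij' (by omega)
        (by rcases hpar with ⟨k, hk⟩; omega)
    have hkey : ((R (j + 1) - R i : ℝ) : EReal) + d j
        = ((R (i + 1) - R i : ℝ) : EReal)
          + (((R j - R (i + 1) : ℝ) : EReal) + (((R (j + 1) - R j : ℝ) : EReal) + d j)) := by
      rw [← add_assoc, ← add_assoc, ← EReal.coe_add, ← EReal.coe_add]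
      norm_num
    rw [hkey]
    calc ((R (i + 1) - R i : ℝ) : EReal) = ((R (i + 1) - R i : ℝ) : EReal) + 0 := by
          rw [add_zero]
    _ ≤ _ := by
        refine add_le_add le_rfl ?_
        calc (0 : EReal) = 0 + 0 := by rw [add_zero]
        _ ≤ _ := by
            refine add_le_add ?_ (h.g2b j hj1 hjn)
            have : (0:ℝ) ≤ (R j : ℝ) - R (i+1) := by
              have := (fun {a b : ℤ} (hab : a ≤ b) => show (a:ℝ) ≤ (b:ℝ) by exact_mod_cast hab) hle; linarith
            exact EReal.coe_nonneg.2 this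

lemma alphaSet_finite (e : ℤ) (n : ℕ) (R : ℕ → ℤ) (d : ℕ → EReal) (i : ℕ) :
    (alphaSet e n R d i).Finite := by
  unfold alphaSet
  refine Set.Finite.union (Set.Finite.union (Set.finite_singleton _) ?_) ?_
  · refine Set.Finite.subset
      ((Set.finite_Icc 1 i).image (fun j => ((R (i + 1) - R j : ℝ) : EReal) + d j)) ?_
    rintro x ⟨j, h1, h2, rfl⟩
    exact ⟨j, ⟨h1, h2⟩, rfl⟩
  · refine Set.Finite.subset
      ((Set.finite_Icc i n).image (fun j => ((R (j + 1) - R i : ℝ) : EReal) + d j)) ?_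
    rintro x ⟨j, h1, h2, rfl⟩
    exact ⟨j, ⟨h1, by omega⟩, rfl⟩

lemma halfTerm_mem (e : ℤ) (n : ℕ) (R : ℕ → ℤ) (d : ℕ → EReal) (i : ℕ) :
    halfTerm e R i ∈ alphaSet e n R d i :=
  Or.inl (Or.inl rfl)

/-- A finite term of the set is an integer. -/
lemma term_int (h : GoodBONG e n R d) {j : ℕ} (hj1 : 1 ≤ j) (hjn : j + 1 ≤ n)
    (a : ℤ) (hne : ((a : ℝ) : EReal) + d j ≠ ⊤) :
    ∃ m : ℤ, ((a : ℝ) : EReal) + d j = ((m : ℝ) : EReal) := by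
  rcases h.g3 j hj1 hjn with h0 | ⟨m, _, _, hm⟩ | h2e | ht
  · exact ⟨a, by rw [h0, add_zero]⟩
  · refine ⟨a + m, ?_⟩
    rw [hm, ← EReal.coe_add]
    norm_num
  · refine ⟨a + 2 * e, ?_⟩
    rw [h2e, ← EReal.coe_add]
    norm_cast
  · exact absurd (by rw [ht]; simp) hne

end Stmt15Aux

open Stmt15Aux in
/-- `α_i < 2e`, `α_i = 2e`, or `α_i > 2e` according as `R_{i+1} - R_i` is
`< 2e`, `= 2e`, or `> 2e`; consequently `α_i ∈ ([0,2e] ∩ ℤ) ∪ ((2e,∞) ∩ ½ℤ)`. -/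
theorem stmt15 (e : ℤ) (n : ℕ) (R : ℕ → ℤ) (d : ℕ → EReal)
    (h : GoodBONG e n R d) (i : ℕ) (hi : 1 ≤ i) (hin : i + 1 ≤ n) :
    (R (i + 1) - R i < 2 * e → alpha e n R d i < (((2 * e : ℤ) : ℝ) : EReal)) ∧
    (R (i + 1) - R i = 2 * e → alpha e n R d i = (((2 * e : ℤ) : ℝ) : EReal)) ∧
    (2 * e < R (i + 1) - R i → (((2 * e : ℤ) : ℝ) : EReal) < alpha e n R d i) ∧
    ((∃ m : ℤ, 0 ≤ m ∧ m ≤ 2 * e ∧ alpha e n R d i = ((m : ℝ) : EReal)) ∨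
      ((((2 * e : ℤ) : ℝ) : EReal) < alpha e n R d i ∧
        ∃ m : ℤ, alpha e n R d i = (((m : ℝ) / 2 : ℝ) : EReal))) := by

  have hne : (alphaSet e n R d i).Nonempty := ⟨_, halfTerm_mem e n R d i⟩
  have hmem : alpha e n R d i ∈ alphaSet e n R d i :=
    hne.csInf_mem (alphaSet_finite e n R d i)
  have hle_half : alpha e n R d i ≤ halfTerm e R i := sInf_le (halfTerm_mem e n R d i)
  -- every element is either the half term or at least `δ = R (i+1) - R i`
  have hb1 : ∀ x ∈ alphaSet e n R d i,
      x = halfTerm e R i ∨ ((R (i + 1) - R i : ℝ) : EReal) ≤ x := by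
    rintro x ((hx | ⟨j, hj1, hj2, rfl⟩) | ⟨j, hj1, hj2, rfl⟩)
    · exact Or.inl hx
    · exact Or.inr (term1_ge h hi hin hj1 hj2)
    · exact Or.inr (term2_ge h hi hj1 hj2)
  -- every element is nonnegative
  have hb0 : ∀ x ∈ alphaSet e n R d i, (0 : EReal) ≤ x := by
    rintro x ((hx | ⟨j, hj1, hj2, rfl⟩) | ⟨j, hj1, hj2, rfl⟩)
    · rw [Set.mem_singleton_iff] at hx
      subst hx
      unfold halfTerm
      refine EReal.coe_nonneg.2 ?_
      have h2a := h.g2a i hi hin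
      have : ((R (i+1) - R i + 2*e : ℤ) : ℝ) ≥ 0 := by exact_mod_cast h2a
      push_cast at this ⊢
      linarith
    · exact term1_nonneg h hi hin hj1 hj2
    · exact term2_nonneg h hi hj1 hj2
  have halpha0 : (0 : EReal) ≤ alpha e n R d i := le_sInf hb0
  have hcast : ∀ a b : ℤ, a < b → (a : ℝ) < (b : ℝ) := fun a b hab => by exact_mod_cast hab
  -- Part 1
  have part1 : R (i + 1) - R i < 2 * e → alpha e n R d i < (((2 * e : ℤ) : ℝ) : EReal) := by
    intro hlt
    refine lt_of_le_of_lt hle_half ?_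
    unfold halfTerm
    refine EReal.coe_lt_coe_iff.2 ?_
    have := hcast _ _ hlt
    push_cast at this ⊢
    linarith
  -- Part 2
  have part2 : R (i + 1) - R i = 2 * e → alpha e n R d i = (((2 * e : ℤ) : ℝ) : EReal) := by
    intro heq
    have hhalf : halfTerm e R i = (((2 * e : ℤ) : ℝ) : EReal) := by
      unfold halfTerm
      congr 1
      have : ((R (i+1) - R i : ℤ) : ℝ) = ((2 * e : ℤ) : ℝ) := by exact_mod_cast heq
      push_cast at this ⊢
      linarith
    refine le_antisymm (hhalf ▸ hle_half) (le_sInf ?_)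
    intro x hx
    rcases hb1 x hx with rfl | hgx
    · rw [hhalf]
    · refine le_trans ?_ hgx
      refine EReal.coe_le_coe_iff.2 ?_
      have : ((2 * e : ℤ) : ℝ) = ((R (i+1) - R i : ℤ) : ℝ) := by exact_mod_cast heq.symm
      push_cast at this ⊢
      linarith
  -- Part 3
  have part3 : 2 * e < R (i + 1) - R i → (((2 * e : ℤ) : ℝ) : EReal) < alpha e n R d i := by
    intro hgt
    have hlb : min (halfTerm e R i) (((R (i + 1) - R i : ℝ) : EReal)) ≤ alpha e n R d i := by
      refine le_sInf ?_
      intro x hx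
      rcases hb1 x hx with rfl | hgx
      · exact min_le_left _ _
      · exact le_trans (min_le_right _ _) hgx
    refine lt_of_lt_of_le (lt_min ?_ ?_) hlb
    · unfold halfTerm
      refine EReal.coe_lt_coe_iff.2 ?_
      have := hcast _ _ hgt
      push_cast at this ⊢
      linarith
    · refine EReal.coe_lt_coe_iff.2 ?_
      have := hcast _ _ hgt
      push_cast at this ⊢
      linarith
  refine ⟨part1, part2, part3, ?_⟩
  -- Part 4
  rcases lt_trichotomy (R (i + 1) - R i) (2 * e) with hlt | heq | hgt
  · -- Case R (i+1) - R i < 2e : α is an integer in [0, 2e]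
    left
    have hαlt := part1 hlt
    have hαne : alpha e n R d i ≠ ⊤ :=
      fun htop => absurd (htop ▸ hαlt) (by simp)
    have hget : ∀ (j : ℕ) (a : ℤ), 1 ≤ j → j + 1 ≤ n →
        alpha e n R d i = ((a : ℝ) : EReal) + d j →
        ∃ m : ℤ, 0 ≤ m ∧ m ≤ 2 * e ∧ alpha e n R d i = ((m : ℝ) : EReal) := by
      intro j a hj1 hjn hαeq
      obtain ⟨m, hm⟩ := term_int h hj1 hjn a (hαeq ▸ hαne)
      refine ⟨m, ?_, ?_, hαeq.trans hm⟩
      · have h0 : (0 : EReal) ≤ ((m : ℝ) : EReal) := (hαeq.trans hm) ▸ halpha0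
        have : (0:ℝ) ≤ (m:ℝ) := EReal.coe_nonneg.1 h0
        exact_mod_cast this
      · have hlt2 : ((m : ℝ) : EReal) < (((2 * e : ℤ) : ℝ) : EReal) := (hαeq.trans hm) ▸ hαlt
        have : (m : ℝ) < ((2 * e : ℤ) : ℝ) := EReal.coe_lt_coe_iff.1 hlt2
        have : (m : ℤ) < 2 * e := by exact_mod_cast this
        omega
    rcases hmem with (hx | ⟨j, hj1, hj2, hx⟩) | ⟨j, hj1, hj2, hx⟩
    · -- α = halfTerm : R (i+1) - R i must be even
      rw [Set.mem_singleton_iff] at hx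
      rcases Int.even_or_odd (R (i + 1) - R i) with ⟨k, hk⟩ | hodd
      · refine ⟨e + k, ?_, ?_, ?_⟩
        · -- 0 ≤ e + k since α ≥ 0
          have h2a := h.g2a i hi hin
          omega
        · omega
        · rw [hx]
          unfold halfTerm
          congr 1
          have : ((R (i+1) - R i : ℤ) : ℝ) = ((k + k : ℤ) : ℝ) := by exact_mod_cast hk
          push_cast at this ⊢
          linarith
      · -- odd case: contradiction, since the term at j = i is strictly smaller
        exfalso
        obtain ⟨hpos, hd0⟩ := h.g4odd i hi hin hodd
        have htm : ((R (i + 1) - R i : ℝ) : EReal) + d i ∈ alphaSet e n R d i :=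
          Or.inr ⟨i, le_refl i, hin, rfl⟩
        have hlt3 : alpha e n R d i ≤ ((R (i + 1) - R i : ℝ) : EReal) := by
          have := sInf_le htm
          rwa [hd0, add_zero] at this
        have : ((R (i + 1) - R i : ℝ) : EReal) < halfTerm e R i := by
          unfold halfTerm
          refine EReal.coe_lt_coe_iff.2 ?_
          have := hcast _ _ hlt
          push_cast at this ⊢
          linarith
        rw [← hx] at this
        exact absurd (lt_of_le_of_lt hlt3 this) (lt_irrefl _)
    · -- α is a term of the first family
      have hx' : alpha e n R d i = (((R (i + 1) - R j : ℤ) : ℝ) : EReal) + d j := by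
        rw [hx]; norm_cast
      exact hget j _ hj1 (by omega) hx'
    · -- α is a term of the second family
      have hx' : alpha e n R d i = (((R (j + 1) - R i : ℤ) : ℝ) : EReal) + d j := by
        rw [hx]; norm_cast
      exact hget j _ (le_trans hi hj1) hj2 hx'
  · -- Case = : α = 2e
    left
    exact ⟨2 * e, by linarith [h.he], le_refl _, part2 heq⟩
  · -- Case > : α > 2e and α is a half integer
    right
    refine ⟨part3 hgt, ?_⟩
    have hαne : alpha e n R d i ≠ ⊤ := by
      intro htop
      rw [htop] at hle_half
      have : halfTerm e R i = ⊤ := top_le_iff.1 hle_half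
      exact absurd this (EReal.coe_ne_top _)
    have hget : ∀ (j : ℕ) (a : ℤ), 1 ≤ j → j + 1 ≤ n →
        alpha e n R d i = ((a : ℝ) : EReal) + d j →
        ∃ m : ℤ, alpha e n R d i = (((m : ℝ) / 2 : ℝ) : EReal) := by
      intro j a hj1 hjn hαeq
      obtain ⟨m, hm⟩ := term_int h hj1 hjn a (hαeq ▸ hαne)
      refine ⟨2 * m, ?_⟩
      rw [hαeq, hm]
      congr 1
      push_cast
      ring
    rcases hmem with (hx | ⟨j, hj1, hj2, hx⟩) | ⟨j, hj1, hj2, hx⟩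
    · rw [Set.mem_singleton_iff] at hx
      refine ⟨R (i + 1) - R i + 2 * e, ?_⟩
      rw [hx]
      unfold halfTerm
      congr 1
      push_cast
      ring
    · have hx' : alpha e n R d i = (((R (i + 1) - R j : ℤ) : ℝ) : EReal) + d j := by
        rw [hx]; norm_cast
      exact hget j _ hj1 (by omega) hx'
    · have hx' : alpha e n R d i = (((R (j + 1) - R i : ℤ) : ℝ) : EReal) + d j := by
        rw [hx]; norm_cast
      exact hget j _ (le_trans hi hj1) hj2 hx'
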